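/- Ridge test error via the derivative of the resolvent trace: with G(λ) := (λ I_k + XXᵀ/k)⁻¹ and Ω symmetric PSD, one has λ²·⟨G Ω G⟩ + Δ·⟨(XXᵀ/k)·G·Ω·G⟩ + Δ = Δ·(⟨Ω G⟩ + 1) − λ·(λ − Δ)·∂_λ⟨Ω G⟩, where ∂_λ⟨Ω G(λ)⟩ = −⟨Ω G(λ)²⟩. -/

import Mathlib

/-!
For `S = XXᵀ/k ⪰ 0` and `t > 0` the matrix `t • 1 + S` is positive definite, so the resolvent
`G(t) = (t • 1 + S)⁻¹` is a genuine inverse and `d/dt A⁻¹ = -A⁻¹ A' A⁻¹` gives `G' = -G²`; composing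
with the linear map `M ↦ ⟨Ω M⟩` yields `∂_λ⟨ΩG⟩ = -⟨ΩG²⟩`. The identity itself is linear algebra:
`S G = 1 - λ G` turns `⟨S G Ω G⟩` into `⟨Ω G⟩ - λ⟨G Ω G⟩`, and cyclicity of the trace gives
`⟨G Ω G⟩ = ⟨Ω G²⟩`.
-/

open Matrix

variable {m : Type*} [Fintype m] [DecidableEq m]

section Calculus

-- `HasDerivAt` for matrix-valued maps only sees the product topology; the operator norm is
-- opened to reach the normed-algebra calculus (`hasFDerivAt_ringInverse`), and induces that topology.
open scoped Matrix.Norms.Operator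

variable {𝕜 : Type*} [RCLike 𝕜]

theorem Matrix.hasDerivAt_nonsing_inv {A : 𝕜 → Matrix m m 𝕜} {A' : Matrix m m 𝕜} {t : 𝕜}
    (hA : HasDerivAt A A' t) (ht : IsUnit (A t)) :
    HasDerivAt (fun s => (A s)⁻¹) (-((A t)⁻¹ * A' * (A t)⁻¹)) t := by
  obtain ⟨u, hu⟩ := ht
  have hinv := (hu ▸ hasFDerivAt_ringInverse (𝕜 := 𝕜) u).comp_hasDerivAt t hA
  simp only [nonsing_inv_eq_ringInverse]
  refine hinv.congr_deriv ?_
  simp [← hu]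

theorem Matrix.hasDerivAt_inv_smul_one_add {S : Matrix m m 𝕜} {t : 𝕜}
    (ht : IsUnit (t • (1 : Matrix m m 𝕜) + S)) :
    HasDerivAt (fun s => (s • (1 : Matrix m m 𝕜) + S)⁻¹)
      (-((t • (1 : Matrix m m 𝕜) + S)⁻¹ * (t • (1 : Matrix m m 𝕜) + S)⁻¹)) t := by
  have hA : HasDerivAt (fun s => s • (1 : Matrix m m 𝕜) + S) 1 t := by
    have h := ((hasDerivAt_id' t).smul_const (1 : Matrix m m 𝕜)).add_const S
    rwa [one_smul] at h
  simpa using hasDerivAt_nonsing_inv hA ht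

theorem HasDerivAt.trace_mul_left {A : 𝕜 → Matrix m m 𝕜} {A' : Matrix m m 𝕜} {t : 𝕜}
    (hA : HasDerivAt A A' t) (B : Matrix m m 𝕜) :
    HasDerivAt (fun s => (B * A s).trace) (B * A').trace t :=
  ((traceLinearMap m 𝕜 𝕜).comp (LinearMap.mulLeft 𝕜 B)).toContinuousLinearMap.hasFDerivAt
    |>.comp_hasDerivAt t hA

end Calculus

section Algebra

variable {R : Type*} [CommRing R] {S : Matrix m m R} {t : R}

theorem Matrix.mul_nonsing_inv_smul_one_add (ht : IsUnit (t • (1 : Matrix m m R) + S)) :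
    S * (t • (1 : Matrix m m R) + S)⁻¹ = 1 - t • (t • (1 : Matrix m m R) + S)⁻¹ := by
  have h := mul_nonsing_inv _ ((isUnit_iff_isUnit_det _).mp ht)
  rw [add_mul, smul_mul_assoc, one_mul] at h
  exact eq_sub_of_add_eq' h

theorem Matrix.mul_nonsing_inv_smul_one_add_mul_mul (ht : IsUnit (t • (1 : Matrix m m R) + S))
    (B : Matrix m m R) :
    S * (t • (1 : Matrix m m R) + S)⁻¹ * B * (t • (1 : Matrix m m R) + S)⁻¹
      = B * (t • (1 : Matrix m m R) + S)⁻¹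
        - t • ((t • (1 : Matrix m m R) + S)⁻¹ * B * (t • (1 : Matrix m m R) + S)⁻¹) := by
  rw [mul_nonsing_inv_smul_one_add ht, sub_mul, sub_mul, one_mul, smul_mul_assoc, smul_mul_assoc]

end Algebra

open scoped ComplexOrder in
omit [Fintype m] in
theorem Matrix.PosSemidef.posDef_smul_one_add {𝕜 : Type*} [RCLike 𝕜] {S : Matrix m m 𝕜}
    (hS : S.PosSemidef) {t : 𝕜} (ht : 0 < t) : (t • (1 : Matrix m m 𝕜) + S).PosDef :=
  (PosDef.one.smul ht).add_posSemidef hS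

theorem ridge_error_derivative_form_general (k n : ℕ) (lam Δ : ℝ)
    (hlam : 0 < lam) (X : Matrix (Fin k) (Fin n) ℝ)
    (Ω : Matrix (Fin k) (Fin k) ℝ) :
    let G : ℝ → Matrix (Fin k) (Fin k) ℝ :=
      fun t => (t • (1 : Matrix (Fin k) (Fin k) ℝ) + (k : ℝ)⁻¹ • (X * Xᵀ))⁻¹
    HasDerivAt (fun t => (Ω * G t).trace / k) (-((Ω * (G lam * G lam)).trace / k)) lam ∧
    lam ^ 2 * ((G lam * Ω * G lam).trace / k)
        + Δ * ((((k : ℝ)⁻¹ • (X * Xᵀ)) * G lam * Ω * G lam).trace / k) + Δ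
      = Δ * ((Ω * G lam).trace / k + 1)
        + lam * (lam - Δ) * ((Ω * (G lam * G lam)).trace / k) := by
  intro G
  have hS : ((k : ℝ)⁻¹ • (X * Xᵀ)).PosSemidef := by
    simpa using (posSemidef_self_mul_conjTranspose X).smul (inv_nonneg.mpr k.cast_nonneg)
  have hunit := (hS.posDef_smul_one_add hlam).isUnit
  have hcycle : (G lam * Ω * G lam).trace = (Ω * (G lam * G lam)).trace := by
    rw [trace_mul_cycle, trace_mul_comm]
  constructor
  · simpa [neg_div] using ((hasDerivAt_inv_smul_one_add hunit).trace_mul_left Ω).div_const (k : ℝ)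
  · rw [mul_nonsing_inv_smul_one_add_mul_mul hunit, trace_sub, trace_smul, smul_eq_mul, hcycle]
    ring

/-- Ridge test error via the derivative of the resolvent trace: with
`G(t) = (tI + XXᵀ/k)⁻¹` one has `∂_λ⟨ΩG⟩ = −⟨ΩG²⟩` and
`λ²⟨GΩG⟩ + Δ⟨(XXᵀ/k)GΩG⟩ + Δ = Δ(⟨ΩG⟩+1) − λ(λ−Δ)∂_λ⟨ΩG⟩`. -/
theorem ridge_error_derivative_form (k n : ℕ) (hk : 0 < k) (lam Δ : ℝ)
    (hlam : 0 < lam) (hΔ : 0 ≤ Δ) (X : Matrix (Fin k) (Fin n) ℝ)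
    (Ω : Matrix (Fin k) (Fin k) ℝ) (hΩ : Ω.PosSemidef) :
    let G : ℝ → Matrix (Fin k) (Fin k) ℝ :=
      fun t => (t • (1 : Matrix (Fin k) (Fin k) ℝ) + (k : ℝ)⁻¹ • (X * Xᵀ))⁻¹
    HasDerivAt (fun t => (Ω * G t).trace / k) (-((Ω * (G lam * G lam)).trace / k)) lam ∧
    lam ^ 2 * ((G lam * Ω * G lam).trace / k)
        + Δ * ((((k : ℝ)⁻¹ • (X * Xᵀ)) * G lam * Ω * G lam).trace / k) + Δ
      = Δ * ((Ω * G lam).trace / k + 1)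
        + lam * (lam - Δ) * ((Ω * (G lam * G lam)).trace / k) :=
  ridge_error_derivative_form_general k n lam Δ hlam X Ω
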